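/- arXiv:2506.04769 — 4 statements merged into one kernel-verified Lean document; each statement's English description precedes it below -/
import Mathlib

section
/- Let 1 < γ₁ < γ₂ and define g(s) = √γ₁ · s^((γ₁-1)/2) − √γ₂ · s^((γ₂-1)/2) for s ≥ 0. Then the unique critical point of g on (0,∞) is s₀ = (√γ₁(γ₁-1)/(√γ₂(γ₂-1)))^(2/(γ₂-γ₁)), and |g(s₀)| ≤ (γ₂-γ₁)·√γ₁/(γ₂-1). -/
open Real

theorem stmt1 (γ₁ γ₂ : ℝ) (h1 : 1 < γ₁) (h2 : γ₁ < γ₂)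
    (g : ℝ → ℝ)
    (hg : ∀ s : ℝ, g s = Real.sqrt γ₁ * s ^ ((γ₁ - 1) / 2) - Real.sqrt γ₂ * s ^ ((γ₂ - 1) / 2))
    (s₀ : ℝ)
    (hs₀ : s₀ = (Real.sqrt γ₁ * (γ₁ - 1) / (Real.sqrt γ₂ * (γ₂ - 1))) ^ (2 / (γ₂ - γ₁))) :
    (∀ s : ℝ, 0 < s → (deriv g s = 0 ↔ s = s₀)) ∧
      |g s₀| ≤ (γ₂ - γ₁) * Real.sqrt γ₁ / (γ₂ - 1) := by
  have hγ1 : (0:ℝ) < γ₁ := by linarith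
  have hγ2 : (0:ℝ) < γ₂ := by linarith
  have h1' : (0:ℝ) < γ₁ - 1 := by linarith
  have h2' : (0:ℝ) < γ₂ - 1 := by linarith
  have hsq1 : 0 < Real.sqrt γ₁ := Real.sqrt_pos.mpr hγ1
  have hsq2 : 0 < Real.sqrt γ₂ := Real.sqrt_pos.mpr hγ2
  set a : ℝ := (γ₁ - 1) / 2 with ha_def
  set b : ℝ := (γ₂ - 1) / 2 with hb_def
  have ha : 0 < a := by rw [ha_def]; linarith
  have hb : 0 < b := by rw [hb_def]; linarith
  have hab : a < b := by rw [ha_def, hb_def]; linarith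
  set c : ℝ := b - a with hc_def
  have hc : 0 < c := by rw [hc_def]; linarith
  have hcne : c ≠ 0 := hc.ne'
  set r : ℝ := Real.sqrt γ₁ * (γ₁ - 1) / (Real.sqrt γ₂ * (γ₂ - 1)) with hr_def
  have hrpos : 0 < r := div_pos (mul_pos hsq1 h1') (mul_pos hsq2 h2')
  have hr_eq : r = Real.sqrt γ₁ * a / (Real.sqrt γ₂ * b) := by
    rw [hr_def, ha_def, hb_def]
    field_simp
  have hrle : r ≤ 1 := by
    rw [hr_def]
    rw [div_le_one (mul_pos hsq2 h2')]
    have hsle : Real.sqrt γ₁ ≤ Real.sqrt γ₂ := Real.sqrt_le_sqrt h2.le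
    nlinarith
  have hexp : 2 / (γ₂ - γ₁) = 1 / c := by
    rw [hc_def, hb_def, ha_def]
    rw [div_eq_div_iff (by linarith) (by linarith)]
    ring
  have hs₀' : s₀ = r ^ (1 / c) := by rw [hs₀, hexp]
  have hs₀pos : 0 < s₀ := hs₀' ▸ Real.rpow_pos_of_pos hrpos _
  have hs₀c : s₀ ^ c = r := by
    rw [hs₀', ← Real.rpow_mul hrpos.le, one_div, inv_mul_cancel₀ hcne, Real.rpow_one]
  have hs₀le1 : s₀ ≤ 1 := by
    rw [hs₀']
    exact Real.rpow_le_one hrpos.le hrle (by positivity)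
  have hgfun : g = fun s => Real.sqrt γ₁ * s ^ a - Real.sqrt γ₂ * s ^ b := funext hg
  have hderiv : ∀ s : ℝ, 0 < s →
      deriv g s = Real.sqrt γ₁ * (a * s ^ (a - 1)) - Real.sqrt γ₂ * (b * s ^ (b - 1)) := by
    intro s hs
    have h1d : HasDerivAt (fun x : ℝ => x ^ a) (a * s ^ (a - 1)) s :=
      Real.hasDerivAt_rpow_const (Or.inl hs.ne')
    have h2d : HasDerivAt (fun x : ℝ => x ^ b) (b * s ^ (b - 1)) s :=
      Real.hasDerivAt_rpow_const (Or.inl hs.ne')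
    have hd := (h1d.const_mul (Real.sqrt γ₁)).sub (h2d.const_mul (Real.sqrt γ₂))
    rw [hgfun]
    exact hd.deriv
  have key : ∀ s : ℝ, 0 < s → (deriv g s = 0 ↔ s ^ c = r) := by
    intro s hs
    rw [hderiv s hs, sub_eq_zero]
    have hsa : (0:ℝ) < s ^ (a - 1) := Real.rpow_pos_of_pos hs _
    have hb1 : s ^ (b - 1) = s ^ (a - 1) * s ^ c := by
      rw [← Real.rpow_add hs, hc_def]; ring_nf
    rw [hb1, hr_eq]
    constructor
    · intro h
      rw [eq_div_iff (mul_pos hsq2 hb).ne']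
      have h' : (Real.sqrt γ₁ * a) * s ^ (a - 1) = (Real.sqrt γ₂ * b * s ^ c) * s ^ (a - 1) := by
        linear_combination h
      have := mul_right_cancel₀ hsa.ne' h'
      linear_combination -this
    · intro h
      rw [eq_div_iff (mul_pos hsq2 hb).ne'] at h
      linear_combination (-(s ^ (a - 1))) * h
  have e3 : ∀ s : ℝ, 0 < s → (s ^ c = r ↔ s = s₀) := by
    intro s hs
    constructor
    · intro h
      rw [hs₀', ← h, ← Real.rpow_mul hs.le, mul_one_div, div_self hcne, Real.rpow_one]
    · intro h
      rw [h]; exact hs₀c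
  constructor
  · intro s hs
    rw [key s hs, e3 s hs]
  · have hb_eq : b = a + c := by rw [hc_def]; ring
    have hs₀b : s₀ ^ b = s₀ ^ a * r := by
      rw [← hs₀c, hb_eq, Real.rpow_add hs₀pos]
    have hgs₀ : g s₀ = Real.sqrt γ₁ * s₀ ^ a * (c / b) := by
      rw [hg s₀, hs₀b, hr_eq, hc_def]
      field_simp
    have hsa1 : s₀ ^ a ≤ 1 := Real.rpow_le_one hs₀pos.le hs₀le1 ha.le
    have hs₀a_pos : 0 < s₀ ^ a := Real.rpow_pos_of_pos hs₀pos _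
    have hnn : 0 ≤ Real.sqrt γ₁ * s₀ ^ a * (c / b) := by
      apply mul_nonneg (mul_nonneg hsq1.le hs₀a_pos.le) (div_nonneg hc.le hb.le)
    rw [hgs₀, abs_of_nonneg hnn]
    have hle : Real.sqrt γ₁ * s₀ ^ a * (c / b) ≤ Real.sqrt γ₁ * 1 * (c / b) := by
      gcongr
    have hRHS : Real.sqrt γ₁ * 1 * (c / b) = (γ₂ - γ₁) * Real.sqrt γ₁ / (γ₂ - 1) := by
      rw [hc_def, hb_def, ha_def]
      field_simp
      ring
    linarith
end

section
/- Let 1 < γ₁ < γ₂ and define h(s) = (γ₁/(γ₁-1))·s^(γ₁-1) − (γ₂/(γ₂-1))·s^(γ₂-1) for s ≥ 0. Then the unique critical point of h on (0,∞) is s₀ = (γ₁/γ₂)^(1/(γ₂-γ₁)), and |h(s₀)| ≤ (γ₂-γ₁)·γ₁/((γ₂-1)(γ₁-1)). -/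
open Real

theorem stmt4 (γ₁ γ₂ : ℝ) (h1 : 1 < γ₁) (h2 : γ₁ < γ₂)
    (h : ℝ → ℝ)
    (hh : ∀ s : ℝ, h s = γ₁ / (γ₁ - 1) * s ^ (γ₁ - 1) - γ₂ / (γ₂ - 1) * s ^ (γ₂ - 1))
    (s₀ : ℝ) (hs₀ : s₀ = (γ₁ / γ₂) ^ (1 / (γ₂ - γ₁))) :
    (∀ s : ℝ, 0 < s → (deriv h s = 0 ↔ s = s₀)) ∧
      |h s₀| ≤ (γ₂ - γ₁) * γ₁ / ((γ₂ - 1) * (γ₁ - 1)) := by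
  have hg1 : (0:ℝ) < γ₁ - 1 := by linarith
  have hg2 : (0:ℝ) < γ₂ - 1 := by linarith
  have hdpos : (0:ℝ) < γ₂ - γ₁ := by linarith
  have hd : γ₂ - γ₁ ≠ 0 := ne_of_gt hdpos
  have hγ₁pos : (0:ℝ) < γ₁ := by linarith
  have hγ₂pos : (0:ℝ) < γ₂ := by linarith
  have hratio : (0:ℝ) < γ₁ / γ₂ := by positivity
  have hs₀pos : 0 < s₀ := by rw [hs₀]; positivity
  have hs₀pow : s₀ ^ (γ₂ - γ₁) = γ₁ / γ₂ := by
    rw [hs₀, ← Real.rpow_mul hratio.le, one_div, inv_mul_cancel₀ hd, Real.rpow_one]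
  have hfun : h = fun s => γ₁ / (γ₁ - 1) * s ^ (γ₁ - 1) - γ₂ / (γ₂ - 1) * s ^ (γ₂ - 1) :=
    funext hh
  have hderiv : ∀ s : ℝ, 0 < s →
      deriv h s = γ₁ * s ^ (γ₁ - 2) - γ₂ * s ^ (γ₂ - 2) := by
    intro s hs
    have d1 : HasDerivAt (fun x : ℝ => x ^ (γ₁ - 1)) ((γ₁ - 1) * s ^ (γ₁ - 1 - 1)) s :=
      Real.hasDerivAt_rpow_const (Or.inl hs.ne')
    have d2 : HasDerivAt (fun x : ℝ => x ^ (γ₂ - 1)) ((γ₂ - 1) * s ^ (γ₂ - 1 - 1)) s :=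
      Real.hasDerivAt_rpow_const (Or.inl hs.ne')
    have D : HasDerivAt h
        (γ₁ / (γ₁ - 1) * ((γ₁ - 1) * s ^ (γ₁ - 1 - 1)) -
          γ₂ / (γ₂ - 1) * ((γ₂ - 1) * s ^ (γ₂ - 1 - 1))) s := by
      rw [hfun]
      exact (d1.const_mul _).sub (d2.const_mul _)
    rw [D.deriv]
    have e1 : γ₁ / (γ₁ - 1) * (γ₁ - 1) = γ₁ := by field_simp
    have e2 : γ₂ / (γ₂ - 1) * (γ₂ - 1) = γ₂ := by field_simp
    have : γ₁ - 1 - 1 = γ₁ - 2 := by ring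
    rw [this]
    have : γ₂ - 1 - 1 = γ₂ - 2 := by ring
    rw [this]
    field_simp
  constructor
  · intro s hs
    rw [hderiv s hs]
    have hsplit : s ^ (γ₂ - 2) = s ^ (γ₁ - 2) * s ^ (γ₂ - γ₁) := by
      rw [← Real.rpow_add hs]; ring_nf
    have hp : (0:ℝ) < s ^ (γ₁ - 2) := Real.rpow_pos_of_pos hs _
    constructor
    · intro heq
      have : γ₁ = γ₂ * s ^ (γ₂ - γ₁) := by
        have := heq
        rw [hsplit] at this
        have h' : (γ₁ - γ₂ * s ^ (γ₂ - γ₁)) * s ^ (γ₁ - 2) = 0 := by ring_nf; ring_nf at this; linarith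
        rcases mul_eq_zero.mp h' with h'' | h''
        · linarith
        · exact absurd h'' hp.ne'
      have hval : s ^ (γ₂ - γ₁) = γ₁ / γ₂ := by
        field_simp
        linarith
      have : s = (γ₁ / γ₂) ^ (1 / (γ₂ - γ₁)) := by
        rw [← hval, one_div, Real.rpow_rpow_inv hs.le hd]
      rw [this, ← hs₀]
    · intro heq
      subst heq
      rw [hsplit, hs₀pow]
      field_simp
      ring
  · have hval : h s₀ = s₀ ^ (γ₁ - 1) * ((γ₂ - γ₁) * γ₁ / ((γ₂ - 1) * (γ₁ - 1))) := by
      rw [hh]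
      have hsplit : s₀ ^ (γ₂ - 1) = s₀ ^ (γ₁ - 1) * s₀ ^ (γ₂ - γ₁) := by
        rw [← Real.rpow_add hs₀pos]; ring_nf
      rw [hsplit, hs₀pow]
      field_simp
      ring
    have hK : 0 ≤ (γ₂ - γ₁) * γ₁ / ((γ₂ - 1) * (γ₁ - 1)) := by positivity
    have hle1 : s₀ ^ (γ₁ - 1) ≤ 1 := by
      apply Real.rpow_le_one hs₀pos.le _ hg1.le
      rw [hs₀]
      apply Real.rpow_le_one hratio.le _ (by positivity)
      rw [div_le_one hγ₂pos]; linarith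
    have hnn : 0 ≤ h s₀ := by
      rw [hval]; positivity
    rw [abs_of_nonneg hnn, hval]
    calc s₀ ^ (γ₁ - 1) * ((γ₂ - γ₁) * γ₁ / ((γ₂ - 1) * (γ₁ - 1)))
        ≤ 1 * ((γ₂ - γ₁) * γ₁ / ((γ₂ - 1) * (γ₁ - 1))) := by
          apply mul_le_mul_of_nonneg_right hle1 hK
      _ = _ := one_mul _
end

section
/- Let 1 < γ₁ < γ₂ and M > 0. Then sup over s ∈ [0,M] of |(γ₁/(γ₁-1))·s^(γ₁-1) − (γ₂/(γ₂-1))·s^(γ₂-1)| is at most (γ₂-γ₁)·( γ₁/((γ₂-1)(γ₁-1)) + M^(γ₁-1)/((γ₂-1)(γ₁-1)) + (γ₂/(γ₂-1))·M^(γ₂-1)·|ln M| ). -/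
open Real

lemma aux1 (s a b : ℝ) (hs0 : 0 ≤ s) (hs1 : s ≤ 1) (ha : 0 < a) (hab : a < b) :
    s ^ a - s ^ b ≤ (b - a) / b := by
  have hb : 0 < b := ha.trans hab
  have hsb0 : 0 ≤ s ^ b := Real.rpow_nonneg hs0 b
  have hsb1 : s ^ b ≤ 1 := Real.rpow_le_one hs0 hs1 hb.le
  have hw1 : (0:ℝ) ≤ a / b := by positivity
  have hw2 : (0:ℝ) ≤ 1 - a / b := by
    rw [sub_nonneg]
    exact div_le_one_of_le₀ hab.le hb.le
  have hgm := Real.geom_mean_le_arith_mean2_weighted hw1 hw2 hsb0 zero_le_one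
    (by field_simp; ring)
  rw [Real.one_rpow, mul_one, mul_one] at hgm
  have h1 : s ^ a ≤ a / b * s ^ b + (1 - a / b) := by
    calc s ^ a = (s ^ b) ^ (a / b) := by
          rw [← Real.rpow_mul hs0]
          congr 1
          field_simp
      _ ≤ a / b * s ^ b + (1 - a / b) := hgm
  have heq : (b - a) / b = 1 - a / b := by field_simp
  rw [heq]
  nlinarith [mul_nonneg hw2 hsb0]

lemma aux2 (s a b : ℝ) (hs0 : 0 < s) :
    s ^ b - s ^ a ≤ (b - a) * (s ^ b * Real.log s) := by
  have h := Real.log_le_sub_one_of_pos (Real.rpow_pos_of_pos hs0 (a - b))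
  rw [Real.log_rpow hs0] at h
  have hb : (0:ℝ) < s ^ b := Real.rpow_pos_of_pos hs0 b
  have hmul := mul_le_mul_of_nonneg_right h hb.le
  have hab : s ^ (a - b) * s ^ b = s ^ a := by
    rw [← Real.rpow_add hs0]
    ring_nf
  nlinarith [hmul, hab]

theorem stmt5 (γ₁ γ₂ M : ℝ) (h1 : 1 < γ₁) (h2 : γ₁ < γ₂) (hM : 0 < M) :
    ∀ s ∈ Set.Icc (0 : ℝ) M,
      |γ₁ / (γ₁ - 1) * s ^ (γ₁ - 1) - γ₂ / (γ₂ - 1) * s ^ (γ₂ - 1)| ≤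
        (γ₂ - γ₁) * (γ₁ / ((γ₂ - 1) * (γ₁ - 1)) +
          M ^ (γ₁ - 1) / ((γ₂ - 1) * (γ₁ - 1)) +
          γ₂ / (γ₂ - 1) * M ^ (γ₂ - 1) * |Real.log M|) := by
  rintro s ⟨hs0, hsM⟩
  have ha : (0:ℝ) < γ₁ - 1 := by linarith
  have hb : (0:ℝ) < γ₂ - 1 := by linarith
  have hab : γ₁ - 1 < γ₂ - 1 := by linarith
  have hg : (0:ℝ) < γ₂ - γ₁ := by linarith
  have hγ2 : (0:ℝ) < γ₂ := by linarith
  have hsa0 : 0 ≤ s ^ (γ₁ - 1) := Real.rpow_nonneg hs0 _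
  have hMa : s ^ (γ₁ - 1) ≤ M ^ (γ₁ - 1) := Real.rpow_le_rpow hs0 hsM ha.le
  have hC : 0 ≤ γ₂ / (γ₂ - 1) * M ^ (γ₂ - 1) * |Real.log M| := by positivity
  have hA : 0 ≤ (γ₂ - γ₁) * (γ₁ / ((γ₂ - 1) * (γ₁ - 1))) := by positivity
  have decomp : γ₁ / (γ₁ - 1) * s ^ (γ₁ - 1) - γ₂ / (γ₂ - 1) * s ^ (γ₂ - 1)
      = (γ₂ - γ₁) / ((γ₂ - 1) * (γ₁ - 1)) * s ^ (γ₁ - 1)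
        + γ₂ / (γ₂ - 1) * (s ^ (γ₁ - 1) - s ^ (γ₂ - 1)) := by
    field_simp
    ring
  -- bound on the second piece
  have key : γ₂ / (γ₂ - 1) * |s ^ (γ₁ - 1) - s ^ (γ₂ - 1)| ≤
      (γ₂ - γ₁) * (γ₁ / ((γ₂ - 1) * (γ₁ - 1)))
        + (γ₂ - γ₁) * (γ₂ / (γ₂ - 1) * M ^ (γ₂ - 1) * |Real.log M|) := by
    rcases le_total s 1 with hs1 | hs1
    · -- s ≤ 1
      have hge : s ^ (γ₂ - 1) ≤ s ^ (γ₁ - 1) := by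
        rcases eq_or_lt_of_le hs0 with h | h
        · rw [← h, Real.zero_rpow ha.ne', Real.zero_rpow hb.ne']
        · exact Real.rpow_le_rpow_of_exponent_ge h hs1 hab.le
      rw [abs_of_nonneg (by linarith)]
      have h₁ := aux1 s (γ₁ - 1) (γ₂ - 1) hs0 hs1 ha hab
      have h₂ : γ₂ / (γ₂ - 1) * ((γ₂ - 1 - (γ₁ - 1)) / (γ₂ - 1)) ≤
          (γ₂ - γ₁) * (γ₁ / ((γ₂ - 1) * (γ₁ - 1))) := by
        rw [div_mul_div_comm, mul_div_assoc', div_le_div_iff₀ (by positivity) (by positivity)]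
        nlinarith [mul_nonneg (mul_nonneg hg.le hb.le) hg.le]
      have h₃ : γ₂ / (γ₂ - 1) * (s ^ (γ₁ - 1) - s ^ (γ₂ - 1)) ≤
          γ₂ / (γ₂ - 1) * ((γ₂ - 1 - (γ₁ - 1)) / (γ₂ - 1)) :=
        mul_le_mul_of_nonneg_left h₁ (by positivity)
      nlinarith [mul_nonneg hg.le hC]
    · -- 1 ≤ s
      have hs0' : (0:ℝ) < s := lt_of_lt_of_le one_pos hs1
      have hM1 : (1:ℝ) ≤ M := le_trans hs1 hsM
      have hle : s ^ (γ₁ - 1) ≤ s ^ (γ₂ - 1) :=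
        Real.rpow_le_rpow_of_exponent_le hs1 hab.le
      rw [abs_sub_comm, abs_of_nonneg (by linarith)]
      have h₁ := aux2 s (γ₁ - 1) (γ₂ - 1) hs0'
      have hmono : s ^ (γ₂ - 1) * Real.log s ≤ M ^ (γ₂ - 1) * Real.log M := by
        have hls : 0 ≤ Real.log s := Real.log_nonneg hs1
        have hlM : Real.log s ≤ Real.log M := Real.log_le_log hs0' hsM
        have hsbM : s ^ (γ₂ - 1) ≤ M ^ (γ₂ - 1) := Real.rpow_le_rpow hs0 hsM hb.le
        exact mul_le_mul hsbM hlM hls (by positivity)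
      have habs : Real.log M = |Real.log M| := (abs_of_nonneg (Real.log_nonneg hM1)).symm
      have h₂ : s ^ (γ₂ - 1) - s ^ (γ₁ - 1) ≤
          (γ₂ - 1 - (γ₁ - 1)) * (M ^ (γ₂ - 1) * Real.log M) := by
        calc s ^ (γ₂ - 1) - s ^ (γ₁ - 1) ≤
            (γ₂ - 1 - (γ₁ - 1)) * (s ^ (γ₂ - 1) * Real.log s) := h₁
          _ ≤ (γ₂ - 1 - (γ₁ - 1)) * (M ^ (γ₂ - 1) * Real.log M) := by
              exact mul_le_mul_of_nonneg_left hmono (by linarith)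
      have h₃ : γ₂ / (γ₂ - 1) * (s ^ (γ₂ - 1) - s ^ (γ₁ - 1)) ≤
          γ₂ / (γ₂ - 1) * ((γ₂ - 1 - (γ₁ - 1)) * (M ^ (γ₂ - 1) * Real.log M)) :=
        mul_le_mul_of_nonneg_left h₂ (by positivity)
      have heq : γ₂ / (γ₂ - 1) * ((γ₂ - 1 - (γ₁ - 1)) * (M ^ (γ₂ - 1) * Real.log M)) =
          (γ₂ - γ₁) * (γ₂ / (γ₂ - 1) * M ^ (γ₂ - 1) * |Real.log M|) := by
        rw [← habs]; ring
      rw [heq] at h₃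
      linarith
  calc |γ₁ / (γ₁ - 1) * s ^ (γ₁ - 1) - γ₂ / (γ₂ - 1) * s ^ (γ₂ - 1)|
      = |(γ₂ - γ₁) / ((γ₂ - 1) * (γ₁ - 1)) * s ^ (γ₁ - 1)
          + γ₂ / (γ₂ - 1) * (s ^ (γ₁ - 1) - s ^ (γ₂ - 1))| := by rw [decomp]
    _ ≤ |(γ₂ - γ₁) / ((γ₂ - 1) * (γ₁ - 1)) * s ^ (γ₁ - 1)|
          + |γ₂ / (γ₂ - 1) * (s ^ (γ₁ - 1) - s ^ (γ₂ - 1))| := abs_add_le _ _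
    _ = (γ₂ - γ₁) / ((γ₂ - 1) * (γ₁ - 1)) * s ^ (γ₁ - 1)
          + γ₂ / (γ₂ - 1) * |s ^ (γ₁ - 1) - s ^ (γ₂ - 1)| := by
        rw [abs_mul, abs_mul,
          abs_of_nonneg (by positivity : (0:ℝ) ≤ (γ₂ - γ₁) / ((γ₂ - 1) * (γ₁ - 1))),
          abs_of_nonneg hsa0, abs_of_nonneg (by positivity : (0:ℝ) ≤ γ₂ / (γ₂ - 1))]
    _ ≤ (γ₂ - γ₁) * (γ₁ / ((γ₂ - 1) * (γ₁ - 1)) +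
          M ^ (γ₁ - 1) / ((γ₂ - 1) * (γ₁ - 1)) +
          γ₂ / (γ₂ - 1) * M ^ (γ₂ - 1) * |Real.log M|) := by
        have hT1 : (γ₂ - γ₁) / ((γ₂ - 1) * (γ₁ - 1)) * s ^ (γ₁ - 1) ≤
            (γ₂ - γ₁) * (M ^ (γ₁ - 1) / ((γ₂ - 1) * (γ₁ - 1))) := by
          rw [div_mul_eq_mul_div, mul_div_assoc]
          gcongr
        linarith [key]
end

section
/- Let 1 < γ₁ < γ₂ and M ≥ 1. Then |(γ₁/(γ₁-1))·M^(γ₁-1) − (γ₂/(γ₂-1))·M^(γ₂-1)| ≤ (γ₂-γ₁)·(M^(γ₁-1)/(γ₂-1))·( 1/(γ₁-1) + γ₂·M^(γ₂-γ₁)·ln M ). -/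
open Real

theorem stmt6 (γ₁ γ₂ M : ℝ) (h1 : 1 < γ₁) (h2 : γ₁ < γ₂) (hM : 1 ≤ M) :
    |γ₁ / (γ₁ - 1) * M ^ (γ₁ - 1) - γ₂ / (γ₂ - 1) * M ^ (γ₂ - 1)| ≤
      (γ₂ - γ₁) * (M ^ (γ₁ - 1) / (γ₂ - 1)) *
        (1 / (γ₁ - 1) + γ₂ * M ^ (γ₂ - γ₁) * Real.log M) := by
  have hM0 : (0:ℝ) < M := lt_of_lt_of_le one_pos hM
  have hlog : 0 ≤ Real.log M := Real.log_nonneg hM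
  have ha : 0 < γ₁ - 1 := by linarith
  have hb : 0 < γ₂ - 1 := by linarith
  have hd : 0 < γ₂ - γ₁ := by linarith
  have hpa : 0 < M ^ (γ₁ - 1) := Real.rpow_pos_of_pos hM0 _
  have hpb : 0 < M ^ (γ₂ - 1) := Real.rpow_pos_of_pos hM0 _
  have hmul : M ^ (γ₁ - 1) * M ^ (γ₂ - γ₁) = M ^ (γ₂ - 1) := by
    rw [← Real.rpow_add hM0]; ring_nf
  have hle : M ^ (γ₁ - 1) ≤ M ^ (γ₂ - 1) :=
    Real.rpow_le_rpow_of_exponent_le hM (by linarith)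
  have key : M ^ (γ₂ - 1) - M ^ (γ₁ - 1) ≤
      (γ₂ - γ₁) * Real.log M * M ^ (γ₂ - 1) := by
    have h1' : M ^ (γ₁ - 1) =
        M ^ (γ₂ - 1) * Real.exp (Real.log M * (γ₁ - γ₂)) := by
      rw [← Real.rpow_def_of_pos hM0, ← Real.rpow_add hM0]; ring_nf
    rw [h1']
    have h2' : 1 - (γ₂ - γ₁) * Real.log M ≤
        Real.exp (Real.log M * (γ₁ - γ₂)) := by
      have := Real.add_one_le_exp (Real.log M * (γ₁ - γ₂)); nlinarith
    nlinarith
  have hdecomp : γ₁ / (γ₁ - 1) * M ^ (γ₁ - 1) - γ₂ / (γ₂ - 1) * M ^ (γ₂ - 1) =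
      (γ₂ - γ₁) / ((γ₁ - 1) * (γ₂ - 1)) * M ^ (γ₁ - 1)
        - γ₂ / (γ₂ - 1) * (M ^ (γ₂ - 1) - M ^ (γ₁ - 1)) := by
    field_simp
    ring
  rw [hdecomp]
  have hT1 : 0 ≤ (γ₂ - γ₁) / ((γ₁ - 1) * (γ₂ - 1)) * M ^ (γ₁ - 1) :=
    mul_nonneg (div_nonneg hd.le (by positivity)) hpa.le
  have hT2 : 0 ≤ γ₂ / (γ₂ - 1) * (M ^ (γ₂ - 1) - M ^ (γ₁ - 1)) :=
    mul_nonneg (div_nonneg (by linarith) hb.le) (by linarith)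
  have habs : |(γ₂ - γ₁) / ((γ₁ - 1) * (γ₂ - 1)) * M ^ (γ₁ - 1)
        - γ₂ / (γ₂ - 1) * (M ^ (γ₂ - 1) - M ^ (γ₁ - 1))| ≤
      (γ₂ - γ₁) / ((γ₁ - 1) * (γ₂ - 1)) * M ^ (γ₁ - 1)
        + γ₂ / (γ₂ - 1) * (M ^ (γ₂ - 1) - M ^ (γ₁ - 1)) := by
    rw [abs_le]
    constructor <;> nlinarith
  refine habs.trans ?_
  have hT2b : γ₂ / (γ₂ - 1) * (M ^ (γ₂ - 1) - M ^ (γ₁ - 1)) ≤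
      γ₂ / (γ₂ - 1) * ((γ₂ - γ₁) * Real.log M * M ^ (γ₂ - 1)) :=
    mul_le_mul_of_nonneg_left key (div_nonneg (by linarith) hb.le)
  have hrhs : (γ₂ - γ₁) * (M ^ (γ₁ - 1) / (γ₂ - 1)) *
        (1 / (γ₁ - 1) + γ₂ * M ^ (γ₂ - γ₁) * Real.log M) =
      (γ₂ - γ₁) / ((γ₁ - 1) * (γ₂ - 1)) * M ^ (γ₁ - 1)
        + γ₂ / (γ₂ - 1) * ((γ₂ - γ₁) * Real.log M * M ^ (γ₂ - 1)) := by
    rw [← hmul]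
    field_simp
  rw [hrhs]
  linarith
end
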